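/- Let R be a completely integrally closed integral domain and let M be a t-super potent maximal t-ideal of R. Then M has height one. -/

import Mathlib

open FractionalIdeal

/-- The fractional ideals of `R` inside its field of fractions. -/
abbrev FracId (R : Type*) [CommRing R] : Type _ :=
  FractionalIdeal (nonZeroDivisors R) (FractionRing R)

/-- A star operation on an integral domain `R`: a map on nonzero fractional ideals satisfying
`(cA)⋆ = c·A⋆`, `R⋆ = R`, `A ⊆ A⋆`, monotonicity, and idempotence.  (The value on the zero
ideal is irrelevant.) -/
structure StarOp (R : Type*) [CommRing R] [IsDomain R] where
  star : FracId R → FracId R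
  star_smul : ∀ c : FractionRing R, c ≠ 0 → ∀ I : FracId R, I ≠ 0 →
    star (spanSingleton (nonZeroDivisors R) c * I) = spanSingleton (nonZeroDivisors R) c * star I
  star_one : star 1 = 1
  le_star : ∀ I : FracId R, I ≠ 0 → I ≤ star I
  star_mono : ∀ I J : FracId R, I ≠ 0 → J ≠ 0 → I ≤ J → star I ≤ star J
  star_idem : ∀ I : FracId R, I ≠ 0 → star (star I) = star I

namespace StarOp

variable {R : Type*} [CommRing R] [IsDomain R]

/-- A star operation has finite type if `A⋆` is the union of `J⋆` over the nonzero finitely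
generated (fractional) subideals `J` of `A`. -/
def FiniteType (s : StarOp R) : Prop :=
  ∀ I : FracId R, I ≠ 0 → ∀ x : FractionRing R, (x ∈ s.star I ↔
    ∃ J : FracId R, J ≠ 0 ∧ (J : Submodule R (FractionRing R)).FG ∧ J ≤ I ∧ x ∈ s.star J)

/-- `⋆₁ ≤ ⋆₂` : `I^⋆₁ ⊆ I^⋆₂` for every nonzero fractional ideal `I`. -/
def le (s₁ s₂ : StarOp R) : Prop := ∀ I : FracId R, I ≠ 0 → s₁.star I ≤ s₂.star I

/-- A (nonzero integral) `⋆`-ideal: an ideal with `I⋆ = I`. -/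
def IsStarIdeal (s : StarOp R) (I : Ideal R) : Prop :=
  I ≠ ⊥ ∧ s.star (I : FracId R) = (I : FracId R)

/-- A maximal `⋆`-ideal: maximal among proper integral `⋆`-ideals. -/
def IsMaxStarIdeal (s : StarOp R) (M : Ideal R) : Prop :=
  M ≠ ⊤ ∧ s.IsStarIdeal M ∧ ∀ J : Ideal R, J ≠ ⊤ → s.IsStarIdeal J → M ≤ J → J = M

/-- A nonzero ideal `I` is `⋆`-invertible if `(I·I⁻¹)⋆ = R`. -/
def IsStarInvertible (s : StarOp R) (I : Ideal R) : Prop :=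
  I ≠ ⊥ ∧ s.star ((I : FracId R) * ((1 : FracId R) / (I : FracId R))) = 1

/-- A nonzero finitely generated ideal is `⋆`-rigid if it is contained in exactly one maximal
`⋆`-ideal. -/
def IsRigid (s : StarOp R) (I : Ideal R) : Prop :=
  I ≠ ⊥ ∧ I.FG ∧ ∃! M : Ideal R, s.IsMaxStarIdeal M ∧ I ≤ M

/-- A `⋆`-rigid ideal is `⋆`-super rigid if every finitely generated ideal containing it is
`⋆`-invertible. -/
def IsSuperRigid (s : StarOp R) (I : Ideal R) : Prop :=
  s.IsRigid I ∧ ∀ J : Ideal R, J.FG → I ≤ J → s.IsStarInvertible J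

/-- A maximal `⋆`-ideal is `⋆`-potent if it contains a `⋆`-rigid ideal. -/
def IsPotent (s : StarOp R) (M : Ideal R) : Prop :=
  s.IsMaxStarIdeal M ∧ ∃ I : Ideal R, s.IsRigid I ∧ I ≤ M

/-- A maximal `⋆`-ideal is `⋆`-super potent if it contains a `⋆`-super rigid ideal. -/
def IsSuperPotent (s : StarOp R) (M : Ideal R) : Prop :=
  s.IsMaxStarIdeal M ∧ ∃ I : Ideal R, s.IsSuperRigid I ∧ I ≤ M

/-- `R` is `⋆`-potent if every maximal `⋆`-ideal is `⋆`-potent. -/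
def PotentDomain (s : StarOp R) : Prop :=
  ∀ M : Ideal R, s.IsMaxStarIdeal M → s.IsPotent M

/-- `R` is `⋆`-super potent if every maximal `⋆`-ideal is `⋆`-super potent. -/
def SuperPotentDomain (s : StarOp R) : Prop :=
  ∀ M : Ideal R, s.IsMaxStarIdeal M → s.IsSuperPotent M

end StarOp

section TOperation

variable {R : Type*} [CommRing R] [IsDomain R]

/-- The `v`-operation `J ↦ (J⁻¹)⁻¹` on fractional ideals. -/
noncomputable def vOp (J : FracId R) : FracId R :=
  (1 : FracId R) / ((1 : FracId R) / J)

/-- The `t`-closure of a fractional ideal: the union of `J^v` over all nonzero finitely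
generated subideals `J` (realized as a submodule of the fraction field). -/
noncomputable def tOp (I : FracId R) : Submodule R (FractionRing R) :=
  ⨆ J ∈ {J : FracId R | J ≠ 0 ∧ (J : Submodule R (FractionRing R)).FG ∧ J ≤ I},
    ((vOp J : FracId R) : Submodule R (FractionRing R))

/-- A (nonzero integral) `t`-ideal. -/
def IsTIdeal (I : Ideal R) : Prop :=
  I ≠ ⊥ ∧ tOp (I : FracId R) = ((I : FracId R) : Submodule R (FractionRing R))

/-- A maximal `t`-ideal: maximal among proper integral `t`-ideals. -/
def IsMaxTIdeal (M : Ideal R) : Prop :=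
  M ≠ ⊤ ∧ IsTIdeal M ∧ ∀ J : Ideal R, J ≠ ⊤ → IsTIdeal J → M ≤ J → J = M

/-- A nonzero ideal `I` is `t`-invertible if `(I·I⁻¹)^t = R`. -/
def IsTInvertible (I : Ideal R) : Prop :=
  I ≠ ⊥ ∧ tOp ((I : FracId R) * ((1 : FracId R) / (I : FracId R))) =
    ((1 : FracId R) : Submodule R (FractionRing R))

/-- A nonzero finitely generated ideal is `t`-rigid if it is contained in exactly one maximal
`t`-ideal. -/
def IsTRigid (I : Ideal R) : Prop :=
  I ≠ ⊥ ∧ I.FG ∧ ∃! M : Ideal R, IsMaxTIdeal M ∧ I ≤ M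

/-- A `t`-rigid ideal is `t`-super rigid if every finitely generated ideal containing it is
`t`-invertible. -/
def IsTSuperRigid (I : Ideal R) : Prop :=
  IsTRigid I ∧ ∀ J : Ideal R, J.FG → I ≤ J → IsTInvertible J

/-- A maximal `t`-ideal is `t`-potent if it contains a `t`-rigid ideal. -/
def IsTPotent (M : Ideal R) : Prop :=
  IsMaxTIdeal M ∧ ∃ I : Ideal R, IsTRigid I ∧ I ≤ M

/-- A maximal `t`-ideal is `t`-super potent if it contains a `t`-super rigid ideal. -/
def IsTSuperPotent (M : Ideal R) : Prop :=
  IsMaxTIdeal M ∧ ∃ I : Ideal R, IsTSuperRigid I ∧ I ≤ M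

end TOperation

/-- `R` is `t`-potent if every maximal `t`-ideal is `t`-potent. -/
def TPotentDomain (R : Type*) [CommRing R] [IsDomain R] : Prop :=
  ∀ M : Ideal R, IsMaxTIdeal M → IsTPotent M

/-- `R` is `t`-super potent if every maximal `t`-ideal is `t`-super potent. -/
def TSuperPotentDomain (R : Type*) [CommRing R] [IsDomain R] : Prop :=
  ∀ M : Ideal R, IsMaxTIdeal M → IsTSuperPotent M

/-- An ideal is invertible if `I·I⁻¹ = R` (as fractional ideals). -/
def IsInvertibleIdeal {R : Type*} [CommRing R] [IsDomain R] (I : Ideal R) : Prop :=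
  I ≠ ⊥ ∧ (I : FracId R) * ((1 : FracId R) / (I : FracId R)) = 1

/-- An ideal `M` is `d`-super potent if it contains a nonzero finitely generated ideal `I`
such that every finitely generated ideal containing `I` is invertible. -/
def IsDSuperPotent {R : Type*} [CommRing R] [IsDomain R] (M : Ideal R) : Prop :=
  ∃ I : Ideal R, I ≠ ⊥ ∧ I.FG ∧ I ≤ M ∧ ∀ J : Ideal R, J.FG → I ≤ J → IsInvertibleIdeal J

/-- An ideal `P` is divided (`P = P R_P`): every `x ∈ P` is divisible, within `P`, by every
`s ∉ P`. -/
def IsDividedIdeal {R : Type*} [CommRing R] (P : Ideal R) : Prop :=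
  ∀ x ∈ P, ∀ s ∉ P, ∃ y ∈ P, x = s * y

/-- A divided prime ideal. -/
def IsDividedPrime {R : Type*} [CommRing R] (P : Ideal R) : Prop :=
  P.IsPrime ∧ IsDividedIdeal P

/-- A valuation domain: an integral domain in which, for any two elements, one divides the
other (equivalently, the ideals are totally ordered by inclusion). -/
def IsValuationDomain (A : Type*) [CommRing A] : Prop :=
  IsDomain A ∧ ∀ a b : A, a ∣ b ∨ b ∣ a

/-- A height-one prime: a nonzero prime ideal such that the only prime strictly below it
is `(0)`. -/
def HeightOnePrime {R : Type*} [CommRing R] (P : Ideal R) : Prop :=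
  P.IsPrime ∧ P ≠ ⊥ ∧ ∀ Q : Ideal R, Q.IsPrime → Q < P → Q = ⊥

/-- `R` has `t`-dimension one: every maximal `t`-ideal has height one. -/
def TDimensionOne (R : Type*) [CommRing R] [IsDomain R] : Prop :=
  ∀ M : Ideal R, IsMaxTIdeal M → HeightOnePrime M

/-- `R` is completely integrally closed: if `a ∈ R` is nonzero, `u` is in the fraction field,
and `a·uⁿ ∈ R` for all `n ≥ 1`, then `u ∈ R`. -/
def CompletelyIntegrallyClosed (R : Type*) [CommRing R] [IsDomain R] : Prop :=
  ∀ (a : R) (u : FractionRing R), a ≠ 0 →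
    (∀ n : ℕ, 0 < n → ∃ r : R, algebraMap R (FractionRing R) a * u ^ n =
      algebraMap R (FractionRing R) r) →
    ∃ r : R, algebraMap R (FractionRing R) r = u

/-- A Prüfer `v`-multiplication domain: every nonzero finitely generated ideal is
`t`-invertible. -/
def IsPvMD (R : Type*) [CommRing R] [IsDomain R] : Prop :=
  ∀ I : Ideal R, I ≠ ⊥ → I.FG → IsTInvertible I

/-- `x` (in the fraction field) belongs to the localization `R_P`, i.e. `x = r/s` with
`s ∉ P`. -/
def MemLocalizationAt {R : Type*} [CommRing R] [IsDomain R] (P : Ideal R)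
    (x : FractionRing R) : Prop :=
  ∃ r s : R, s ∉ P ∧ algebraMap R (FractionRing R) s * x = algebraMap R (FractionRing R) r

/-- An essential domain: `R` is an intersection (inside its fraction field) of localizations
at primes which are valuation domains. -/
def EssentialDomain (R : Type*) [CommRing R] [IsDomain R] : Prop :=
  ∃ 𝓟 : Set (Ideal R),
    (∀ P ∈ 𝓟, ∃ hP : P.IsPrime,
      IsValuationDomain (Localization (@Ideal.primeCompl R _ P hP))) ∧
    (∀ x : FractionRing R, (∀ P ∈ 𝓟, MemLocalizationAt P x) ↔
      ∃ r : R, algebraMap R (FractionRing R) r = x)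

/-- A generalized Krull domain: `R` is a locally finite intersection of essential rank-one
(height-one) valuation localizations. -/
def GeneralizedKrullDomain (R : Type*) [CommRing R] [IsDomain R] : Prop :=
  ∃ 𝓟 : Set (Ideal R),
    (∀ P ∈ 𝓟, ∃ hP : P.IsPrime, HeightOnePrime P ∧
      IsValuationDomain (Localization (@Ideal.primeCompl R _ P hP))) ∧
    (∀ x : FractionRing R, (∀ P ∈ 𝓟, MemLocalizationAt P x) ↔
      ∃ r : R, algebraMap R (FractionRing R) r = x) ∧
    (∀ a : R, a ≠ 0 → {P : Ideal R | P ∈ 𝓟 ∧ a ∈ P}.Finite)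

set_option linter.unusedSectionVars false

section Aux18

variable {R : Type*} [CommRing R] [IsDomain R]

private theorem aux_inj : Function.Injective (algebraMap R (FractionRing R)) :=
  IsFractionRing.injective R (FractionRing R)

private theorem aux_map_ne_zero {a : R} (ha : a ≠ 0) :
    algebraMap R (FractionRing R) a ≠ 0 := by
  intro h
  exact ha (aux_inj (by simpa using h))

private theorem one_div_ne_zero' {I : FracId R} (hI : I ≠ 0) : (1 : FracId R) / I ≠ 0 := by
  obtain ⟨a, haS, ha⟩ := I.isFractional
  have hmem : algebraMap R (FractionRing R) a ∈ (1 : FracId R) / I := by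
    rw [mem_div_iff_of_ne_zero hI]
    intro y hy
    obtain ⟨r, hr⟩ := ha y hy
    exact (mem_one_iff _).mpr ⟨r, by rw [hr, Algebra.smul_def]⟩
  intro h
  rw [h, mem_zero_iff] at hmem
  exact aux_map_ne_zero (nonZeroDivisors.ne_zero haS) hmem

private theorem div_antitone {I J : FracId R} (hI : I ≠ 0) (hIJ : I ≤ J) :
    (1 : FracId R) / J ≤ 1 / I := by
  refine (le_div_iff_mul_le hI).mpr ?_
  calc (1 : FracId R) / J * I ≤ 1 / J * J := mul_right_mono hIJ
    _ ≤ 1 := by rw [mul_comm]; exact mul_one_div_le_one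

private theorem le_vOp {I : FracId R} (hI : I ≠ 0) : I ≤ vOp I := by
  rw [vOp]
  exact (le_div_iff_mul_le (one_div_ne_zero' hI)).mpr mul_one_div_le_one

private theorem vOp_ne_zero {I : FracId R} (hI : I ≠ 0) : vOp I ≠ 0 := by
  intro h
  exact hI (le_antisymm (h ▸ le_vOp hI) (zero_le _))

private theorem one_ne_zero_frac : (1 : FracId R) ≠ 0 := by
  intro h
  have : (1 : FractionRing R) ∈ (1 : FracId R) := one_mem_one _
  rw [h, mem_zero_iff] at this
  exact one_ne_zero this

private theorem vOp_le_one {I : FracId R} (hI : I ≠ 0) (h1 : I ≤ 1) : vOp I ≤ 1 := by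
  have h : (1 : FracId R) ≤ 1 / I := by
    refine (le_div_iff_mul_le hI).mpr ?_
    rw [one_mul]; exact h1
  have := div_antitone one_ne_zero_frac h
  rwa [FractionalIdeal.div_one] at this

private theorem vOp_mono {I J : FracId R} (hI : I ≠ 0) (hIJ : I ≤ J) : vOp I ≤ vOp J := by
  have hJ : J ≠ 0 := fun h => hI (le_antisymm (h ▸ hIJ) (zero_le _))
  exact div_antitone (one_div_ne_zero' hJ) (div_antitone hI hIJ)

private theorem one_div_one_div_one_div {I : FracId R} (hI : I ≠ 0) :
    (1 : FracId R) / (1 / (1 / I)) = 1 / I :=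
  le_antisymm (div_antitone hI (le_vOp hI)) (le_vOp (one_div_ne_zero' hI))

private theorem vOp_idem {I : FracId R} (hI : I ≠ 0) : vOp (vOp I) = vOp I :=
  one_div_one_div_one_div (one_div_ne_zero' hI)

private theorem vOp_one : vOp (1 : FracId R) = 1 := by
  rw [vOp, FractionalIdeal.div_one, FractionalIdeal.div_one]


private theorem exists_mem_ne_zero {I : FracId R} (hI : I ≠ 0) : ∃ y ∈ I, y ≠ 0 := by
  by_contra h
  push_neg at h
  apply hI
  apply FractionalIdeal.ext
  intro x
  rw [mem_zero_iff]
  exact ⟨fun hx => h x hx, fun hx => hx ▸ zero_mem _⟩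

private theorem spanSingleton_mul_ne_zero {x : FractionRing R} (hx : x ≠ 0) {I : FracId R}
    (hI : I ≠ 0) : spanSingleton (nonZeroDivisors R) x * I ≠ 0 := by
  obtain ⟨y, hy, hy0⟩ := exists_mem_ne_zero hI
  intro h
  have : x * y ∈ spanSingleton (nonZeroDivisors R) x * I :=
    mul_mem_mul (mem_spanSingleton_self _ x) hy
  rw [h, mem_zero_iff] at this
  exact (mul_ne_zero hx hy0) this

private theorem one_div_spanSingleton_mul {x : FractionRing R} (hx : x ≠ 0) {I : FracId R}
    (hI : I ≠ 0) :
    (1 : FracId R) / (spanSingleton (nonZeroDivisors R) x * I) =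
      spanSingleton (nonZeroDivisors R) x⁻¹ * (1 / I) := by
  have hxI : spanSingleton (nonZeroDivisors R) x * I ≠ 0 :=
    spanSingleton_mul_ne_zero hx hI
  apply le_antisymm
  · intro y hy
    change y ∈ (1 : FracId R) / (spanSingleton (nonZeroDivisors R) x * I) at hy
    change y ∈ spanSingleton (nonZeroDivisors R) x⁻¹ * ((1 : FracId R) / I)
    rw [mem_div_iff_of_ne_zero hxI] at hy
    rw [mem_singleton_mul]
    refine ⟨x * y, ?_, by field_simp⟩
    rw [mem_div_iff_of_ne_zero hI]
    intro z hz
    have h2 := hy (x * z) (mul_mem_mul (mem_spanSingleton_self _ x) hz)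
    have heq : x * y * z = y * (x * z) := by ring
    rw [heq]
    exact h2
  · rw [le_div_iff_mul_le hxI, mul_le]
    intro i hi j hj
    rw [mem_singleton_mul] at hi
    obtain ⟨i', hi', rfl⟩ := hi
    rw [mem_singleton_mul] at hj
    obtain ⟨j', hj', rfl⟩ := hj
    rw [mem_div_iff_of_ne_zero hI] at hi'
    have h2 := hi' j' hj'
    have heq : x⁻¹ * i' * (x * j') = i' * j' := by
      field_simp
    rw [heq]
    exact h2

private theorem vOp_spanSingleton_mul {x : FractionRing R} (hx : x ≠ 0) {I : FracId R}
    (hI : I ≠ 0) :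
    vOp (spanSingleton (nonZeroDivisors R) x * I) =
      spanSingleton (nonZeroDivisors R) x * vOp I := by
  rw [vOp, vOp, one_div_spanSingleton_mul hx hI,
    one_div_spanSingleton_mul (inv_ne_zero hx) (one_div_ne_zero' hI), inv_inv]


end Aux18

section Aux18T

variable {R : Type*} [CommRing R] [IsDomain R]

private theorem vOp_le_tOp {I J : FracId R} (hJ0 : J ≠ 0)
    (hJfg : (J : Submodule R (FractionRing R)).FG) (hJI : J ≤ I) :
    ((vOp J : FracId R) : Submodule R (FractionRing R)) ≤ tOp I :=
  le_iSup₂_of_le J ⟨hJ0, hJfg, hJI⟩ le_rfl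

private theorem spanSingleton_fg (x : FractionRing R) :
    ((spanSingleton (nonZeroDivisors R) x : FracId R) : Submodule R (FractionRing R)).FG := by
  rw [coe_spanSingleton]
  exact Submodule.fg_span_singleton x

private theorem le_tOp (I : FracId R) : (I : Submodule R (FractionRing R)) ≤ tOp I := by
  intro x hx
  rw [mem_coe] at hx
  by_cases hx0 : x = 0
  · rw [hx0]; exact zero_mem _
  · have h1 : spanSingleton (nonZeroDivisors R) x ≠ (0 : FracId R) :=
      spanSingleton_ne_zero_iff.mpr hx0
    have h3 : spanSingleton (nonZeroDivisors R) x ≤ I := spanSingleton_le_iff_mem.mpr hx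
    refine vOp_le_tOp h1 (spanSingleton_fg x) h3 ?_
    rw [mem_coe]
    exact le_vOp h1 (mem_spanSingleton_self _ x)

private theorem tOp_mono {I I' : FracId R} (h : I ≤ I') : tOp I ≤ tOp I' :=
  iSup₂_le fun J hJ => vOp_le_tOp hJ.1 hJ.2.1 (hJ.2.2.trans h)

private theorem tOp_le_one {I : FracId R} (hI : I ≤ 1) :
    tOp I ≤ ((1 : FracId R) : Submodule R (FractionRing R)) :=
  iSup₂_le fun _ hJ => coe_le_coe.mpr (vOp_le_one hJ.1 (hJ.2.2.trans hI))

private theorem tOp_coe_fg {J : FracId R} (hJ0 : J ≠ 0)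
    (hfg : (J : Submodule R (FractionRing R)).FG) :
    tOp J = ((vOp J : FracId R) : Submodule R (FractionRing R)) :=
  le_antisymm (iSup₂_le fun _ hJ' => coe_le_coe.mpr (vOp_mono hJ'.1 hJ'.2.2))
    (vOp_le_tOp hJ0 hfg le_rfl)

private theorem mem_tOp {I : FracId R} (hI : I ≠ 0) {x : FractionRing R} (hx : x ∈ tOp I) :
    ∃ J : FracId R, (J ≠ 0 ∧ (J : Submodule R (FractionRing R)).FG ∧ J ≤ I) ∧ x ∈ vOp J := by
  obtain ⟨y, hy, hy0⟩ := exists_mem_ne_zero hI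
  set s : Set (FracId R) :=
    {J : FracId R | J ≠ 0 ∧ (J : Submodule R (FractionRing R)).FG ∧ J ≤ I} with hs
  have hmem : spanSingleton (nonZeroDivisors R) y ∈ s :=
    ⟨spanSingleton_ne_zero_iff.mpr hy0, spanSingleton_fg y, spanSingleton_le_iff_mem.mpr hy⟩
  have hne : Nonempty s := ⟨⟨_, hmem⟩⟩
  have hdir : Directed (· ≤ ·)
      (fun J : s => ((vOp J.1 : FracId R) : Submodule R (FractionRing R))) := by
    rintro ⟨A, hA⟩ ⟨B, hB⟩
    refine ⟨⟨A ⊔ B, ?_, ?_, sup_le hA.2.2 hB.2.2⟩, ?_, ?_⟩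
    · intro h
      exact hA.1 (le_antisymm (le_sup_left.trans h.le) (zero_le _))
    · rw [coe_sup]
      exact Submodule.FG.sup hA.2.1 hB.2.1
    · exact coe_le_coe.mpr (vOp_mono hA.1 le_sup_left)
    · exact coe_le_coe.mpr (vOp_mono hB.1 le_sup_right)
  have : tOp I = ⨆ J : s, ((vOp J.1 : FracId R) : Submodule R (FractionRing R)) := by
    rw [tOp, iSup_subtype']
  rw [this, Submodule.mem_iSup_of_directed _ hdir] at hx
  obtain ⟨⟨J, hJ⟩, hxJ⟩ := hx
  rw [mem_coe] at hxJ
  exact ⟨J, hJ, hxJ⟩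

private theorem tOp_cover {I : FracId R} (hI : I ≠ 0) (S : Finset (FractionRing R))
    (hS : ∀ y ∈ S, y ∈ tOp I) :
    ∃ J : FracId R, (J ≠ 0 ∧ (J : Submodule R (FractionRing R)).FG ∧ J ≤ I) ∧
      ∀ y ∈ S, y ∈ vOp J := by
  classical
  induction S using Finset.induction_on with
  | empty =>
    obtain ⟨y, hy, hy0⟩ := exists_mem_ne_zero hI
    exact ⟨spanSingleton (nonZeroDivisors R) y,
      ⟨spanSingleton_ne_zero_iff.mpr hy0, spanSingleton_fg y,
        spanSingleton_le_iff_mem.mpr hy⟩, fun y hy => absurd hy (Finset.notMem_empty y)⟩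
  | @insert a S ha ih =>
    obtain ⟨J₁, hJ₁, hJ₁mem⟩ := ih fun y hy => hS y (Finset.mem_insert_of_mem hy)
    obtain ⟨J₂, hJ₂, hJ₂mem⟩ := mem_tOp hI (hS a (Finset.mem_insert_self a S))
    refine ⟨J₁ ⊔ J₂, ⟨?_, ?_, sup_le hJ₁.2.2 hJ₂.2.2⟩, ?_⟩
    · intro h
      exact hJ₁.1 (le_antisymm (le_sup_left.trans h.le) (zero_le _))
    · rw [coe_sup]; exact Submodule.FG.sup hJ₁.2.1 hJ₂.2.1
    · intro y hy
      rcases Finset.mem_insert.mp hy with rfl | hy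
      · exact vOp_mono hJ₂.1 le_sup_right hJ₂mem
      · exact vOp_mono hJ₁.1 le_sup_left (hJ₁mem y hy)

private theorem tOp_cover' {I : FracId R} (hI : I ≠ 0) {G : FracId R} (hGfg : (G : Submodule R (FractionRing R)).FG)
    (hG : (G : Submodule R (FractionRing R)) ≤ tOp I) :
    ∃ J : FracId R, (J ≠ 0 ∧ (J : Submodule R (FractionRing R)).FG ∧ J ≤ I) ∧ G ≤ vOp J := by
  obtain ⟨S, hS⟩ := hGfg
  obtain ⟨J, hJ, hJmem⟩ := tOp_cover hI S fun y hy =>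
    hG (hS ▸ Submodule.subset_span hy)
  refine ⟨J, hJ, ?_⟩
  rw [← coe_le_coe, ← hS, Submodule.span_le]
  intro y hy
  rw [SetLike.mem_coe, mem_coe]
  exact hJmem y hy

private theorem tOp_fixed (I : FracId R) (hI : I ≠ 0)
    {W : FracId R} (hW : (W : Submodule R (FractionRing R)) = tOp I) : tOp W = tOp I := by
  apply le_antisymm
  · refine iSup₂_le fun G hG => ?_
    have hGt : (G : Submodule R (FractionRing R)) ≤ tOp I := hW ▸ coe_le_coe.mpr hG.2.2
    obtain ⟨J, hJ, hGJ⟩ := tOp_cover' hI hG.2.1 hGt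
    calc ((vOp G : FracId R) : Submodule R (FractionRing R))
        ≤ ((vOp (vOp J) : FracId R) : Submodule R (FractionRing R)) :=
          coe_le_coe.mpr (vOp_mono hG.1 hGJ)
      _ = ((vOp J : FracId R) : Submodule R (FractionRing R)) := by rw [vOp_idem hJ.1]
      _ ≤ tOp I := vOp_le_tOp hJ.1 hJ.2.1 hJ.2.2
  · rw [← hW]
    exact le_tOp W

end Aux18T

section Aux18Z

variable {R : Type*} [CommRing R] [IsDomain R]

private theorem mk_tIdeal {W : Ideal R} (hW0 : W ≠ ⊥)
    (h : ∀ G : FracId R, G ≠ 0 → (G : Submodule R (FractionRing R)).FG →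
      G ≤ (W : FracId R) → vOp G ≤ (W : FracId R)) : IsTIdeal W :=
  ⟨hW0, le_antisymm (iSup₂_le fun G hG => coe_le_coe.mpr (h G hG.1 hG.2.1 hG.2.2))
    (le_tOp _)⟩

private theorem coeIdeal_ne_zero'' {W : Ideal R} (hW0 : W ≠ ⊥) :
    (W : FracId R) ≠ 0 := by
  rw [ne_eq, coeIdeal_eq_zero]
  exact hW0

private theorem tIdeal_absorbs {W : Ideal R} (hW : IsTIdeal W) {G : FracId R} (hG0 : G ≠ 0)
    (hGfg : (G : Submodule R (FractionRing R)).FG) (hGW : G ≤ (W : FracId R)) :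
    vOp G ≤ (W : FracId R) := by
  rw [← coe_le_coe, ← hW.2]
  exact vOp_le_tOp hG0 hGfg hGW

private theorem chain_cover {c : Set (Ideal R)} (hchain : IsChain (· ≤ ·) c)
    {W₀ : Ideal R} (hW₀c : W₀ ∈ c) (S : Finset (FractionRing R))
    (hS : ∀ y ∈ S, y ∈ ((sSup c : Ideal R) : FracId R)) :
    ∃ P ∈ c, ∀ y ∈ S, y ∈ (P : FracId R) := by
  classical
  induction S using Finset.induction_on with
  | empty => exact ⟨W₀, hW₀c, fun y hy => absurd hy (Finset.notMem_empty y)⟩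
  | @insert a S' ha ih =>
    obtain ⟨P₁, hP₁c, hP₁⟩ := ih fun y hy => hS y (Finset.mem_insert_of_mem hy)
    have haS : a ∈ ((sSup c : Ideal R) : FracId R) := hS a (Finset.mem_insert_self a S')
    rw [mem_coeIdeal] at haS
    obtain ⟨u, hu, hua⟩ := haS
    rw [Submodule.mem_sSup_of_directed ⟨W₀, hW₀c⟩ (IsChain.directedOn hchain)] at hu
    obtain ⟨P₂, hP₂c, hP₂⟩ := hu
    rcases hchain.total hP₁c hP₂c with h | h
    · refine ⟨P₂, hP₂c, fun y hy => ?_⟩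
      rcases Finset.mem_insert.mp hy with rfl | hy
      · exact (mem_coeIdeal _).mpr ⟨u, hP₂, hua⟩
      · exact (coeIdeal_le_coeIdeal _).mpr h (hP₁ y hy)
    · refine ⟨P₁, hP₁c, fun y hy => ?_⟩
      rcases Finset.mem_insert.mp hy with rfl | hy
      · exact (mem_coeIdeal _).mpr ⟨u, h hP₂, hua⟩
      · exact hP₁ y hy

/-- Every proper t-ideal is contained in a maximal t-ideal. -/
private theorem exists_maxT {E : Ideal R} (hE : IsTIdeal E) (hEne : E ≠ ⊤) :
    ∃ N : Ideal R, IsMaxTIdeal N ∧ E ≤ N := by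
  classical
  set s : Set (Ideal R) := {W : Ideal R | IsTIdeal W ∧ W ≠ ⊤} with hs
  have hzorn : ∀ c ⊆ s, IsChain (· ≤ ·) c → ∀ y ∈ c, ∃ ub ∈ s, ∀ z ∈ c, z ≤ ub := by
    rintro c hcs hchain W₀ hW₀c
    have hbot : sSup c ≠ ⊥ := by
      intro h
      have : W₀ ≤ (⊥ : Ideal R) := h ▸ le_sSup hW₀c
      exact (hcs hW₀c).1.1 (le_bot_iff.mp this)
    have htid : IsTIdeal (sSup c) := by
      refine mk_tIdeal hbot ?_
      intro G hG0 hGfg hGW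
      obtain ⟨S, hSG⟩ := id hGfg
      have hScond : ∀ y ∈ S, y ∈ ((sSup c : Ideal R) : FracId R) := by
        intro y hy
        have hyG : y ∈ (G : Submodule R (FractionRing R)) :=
          hSG ▸ Submodule.subset_span hy
        rw [mem_coe] at hyG
        exact hGW hyG
      obtain ⟨P, hPc, hP⟩ := chain_cover hchain hW₀c S hScond
      have hGP : G ≤ (P : FracId R) := by
        rw [← coe_le_coe, ← hSG, Submodule.span_le]
        intro y hy
        rw [SetLike.mem_coe, mem_coe]
        exact hP y hy
      calc vOp G ≤ (P : FracId R) := tIdeal_absorbs (hcs hPc).1 hG0 hGfg hGP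
        _ ≤ ((sSup c : Ideal R) : FracId R) := (coeIdeal_le_coeIdeal _).mpr (le_sSup hPc)
    have htop : sSup c ≠ ⊤ := by
      intro h
      have h1 : (1 : R) ∈ sSup c := h ▸ Submodule.mem_top
      rw [Submodule.mem_sSup_of_directed ⟨W₀, hW₀c⟩ (IsChain.directedOn hchain)] at h1
      obtain ⟨P, hPc, hP⟩ := h1
      exact (hcs hPc).2 ((Ideal.eq_top_iff_one P).mpr hP)
    exact ⟨sSup c, ⟨htid, htop⟩, fun z hz => le_sSup hz⟩
  obtain ⟨N, hEN, hNmax⟩ := zorn_le_nonempty₀ s hzorn E ⟨hE, hEne⟩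
  refine ⟨N, ⟨hNmax.prop.2, hNmax.prop.1, ?_⟩, hEN⟩
  intro J hJne hJt hNJ
  exact le_antisymm (hNmax.le_of_ge ⟨hJt, hJne⟩ hNJ) hNJ

end Aux18Z

section Aux18P

variable {R : Type*} [CommRing R] [IsDomain R]

private theorem coeIdeal_mem {W : Ideal R} {w : R} (hw : w ∈ W) :
    algebraMap R (FractionRing R) w ∈ (W : FracId R) :=
  (mem_coeIdeal _).mpr ⟨w, hw, rfl⟩

private theorem mem_of_coeIdeal_mem {W : Ideal R} {w : R}
    (hw : algebraMap R (FractionRing R) w ∈ (W : FracId R)) : w ∈ W := by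
  obtain ⟨w', hw', hww⟩ := (mem_coeIdeal _).mp hw
  rwa [← aux_inj hww]

private theorem maxT_prime {M : Ideal R} (h : IsMaxTIdeal M) : M.IsPrime := by
  constructor
  · exact h.1
  · intro x y hxy
    by_cases hy : y ∈ M
    · exact Or.inr hy
    refine Or.inl ?_
    by_cases hx0 : x = 0
    · rw [hx0]; exact zero_mem M
    set X : Ideal R := M ⊔ Ideal.span {y} with hX
    have hMX : M ≤ X := le_sup_left
    have hM0 : M ≠ ⊥ := h.2.1.1
    have hX0 : X ≠ ⊥ := fun hb => hM0 (le_bot_iff.mp (hb ▸ hMX))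
    have hXne : (X : FracId R) ≠ 0 := coeIdeal_ne_zero'' hX0
    -- step 1 : 1 ∈ tOp X
    have h1 : (1 : FractionRing R) ∈ tOp (X : FracId R) := by
      by_contra h1n
      set T' : Ideal R :=
        Submodule.comap (Algebra.linearMap R (FractionRing R)) (tOp (X : FracId R)) with hT'
      have hcoe : ((T' : FracId R) : Submodule R (FractionRing R)) = tOp (X : FracId R) := by
        rw [coe_coeIdeal, IsLocalization.coeSubmodule, Submodule.map_comap_eq]
        refine inf_eq_right.mpr ?_
        have := tOp_le_one (coeIdeal_le_one (I := X) (S := nonZeroDivisors R))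
        rwa [coe_one, Submodule.one_eq_range] at this
      have hMT : M ≤ T' := by
        intro m hm
        exact le_tOp (X : FracId R) ((mem_coe).mpr (coeIdeal_mem (hMX hm)))
      have hyT : y ∈ T' := by
        have : y ∈ X := (le_sup_right : Ideal.span {y} ≤ X) (Ideal.mem_span_singleton_self y)
        exact le_tOp (X : FracId R) ((mem_coe).mpr (coeIdeal_mem this))
      have hT'top : T' ≠ ⊤ := by
        intro ht
        apply h1n
        have h1T : (1 : R) ∈ T' := ht ▸ Submodule.mem_top
        have := Submodule.mem_comap.mp h1T
        simpa using this
      have hT'tid : IsTIdeal T' := by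
        refine ⟨fun hb => hM0 (le_bot_iff.mp (hb ▸ hMT)), ?_⟩
        rw [tOp_fixed (X : FracId R) hXne hcoe, hcoe]
      have := h.2.2 T' hT'top hT'tid hMT
      exact hy (this ▸ hyT)
    obtain ⟨J, hJ, h1v⟩ := mem_tOp hXne h1
    have hφx : algebraMap R (FractionRing R) x ≠ 0 := aux_map_ne_zero hx0
    set J' : FracId R := spanSingleton (nonZeroDivisors R) (algebraMap R (FractionRing R) x) * J
      with hJ'
    have hJ'0 : J' ≠ 0 := spanSingleton_mul_ne_zero hφx hJ.1
    have hJ'fg : (J' : Submodule R (FractionRing R)).FG := by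
      rw [hJ', coe_mul]
      exact Submodule.FG.mul (spanSingleton_fg _) hJ.2.1
    have hJ'M : J' ≤ (M : FracId R) := by
      rw [hJ', mul_le]
      intro i hi j hj
      rw [mem_spanSingleton] at hi
      obtain ⟨z, rfl⟩ := hi
      have hjX : j ∈ (X : FracId R) := hJ.2.2 hj
      obtain ⟨w, hw, rfl⟩ := (mem_coeIdeal _).mp hjX
      obtain ⟨m, hm, z', hz', rfl⟩ := Submodule.mem_sup.mp hw
      obtain ⟨r, rfl⟩ := Ideal.mem_span_singleton.mp hz'
      have hxw : x * (m + y * r) ∈ M := by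
        have : x * (m + y * r) = x * m + (x * y) * r := by ring
        rw [this]
        exact add_mem (M.mul_mem_left x hm) (M.mul_mem_right r hxy)
      have : z • algebraMap R (FractionRing R) x * algebraMap R (FractionRing R) (m + y * r)
          = z • algebraMap R (FractionRing R) (x * (m + y * r)) := by
        rw [_root_.map_mul, smul_mul_assoc]
      rw [this]
      exact Submodule.smul_mem _ z (coeIdeal_mem hxw)
    have hmem : algebraMap R (FractionRing R) x ∈ vOp J' := by
      rw [hJ', vOp_spanSingleton_mul hφx hJ.1, mem_singleton_mul]
      exact ⟨1, h1v, (mul_one _).symm⟩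
    have := tIdeal_absorbs h.2.1 hJ'0 hJ'fg hJ'M hmem
    exact mem_of_coeIdeal_mem this

end Aux18P

section Aux18L

variable {R : Type*} [CommRing R] [IsDomain R]

private theorem lp_aux {M : Ideal R} (hM : IsMaxTIdeal M) {J : Ideal R} (hJ : IsTInvertible J) :
    ∃ c ∈ J, ∃ t : R, t ∉ M ∧ ∀ j ∈ J, ∃ r, t * j = c * r := by
  have hJ0 : (J : FracId R) ≠ 0 := coeIdeal_ne_zero'' hJ.1
  have hMtop : M ≠ ⊤ := hM.1
  have hnle : ¬ ((J : FracId R) * (1 / (J : FracId R)) ≤ (M : FracId R)) := by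
    intro hle
    have h2 := tOp_mono hle
    rw [hJ.2, hM.2.1.2] at h2
    have h1 : (1 : FractionRing R) ∈ ((M : FracId R) : Submodule R (FractionRing R)) :=
      h2 (by rw [mem_coe]; exact one_mem_one _)
    rw [mem_coe] at h1
    have : (1 : R) ∈ M := by
      obtain ⟨m, hm, hm1⟩ := (mem_coeIdeal _).mp h1
      have hm2 : m = 1 := by simpa using hm1
      rwa [← hm2]
    exact hMtop ((Ideal.eq_top_iff_one M).mpr this)
  obtain ⟨w, hw, hwM⟩ := SetLike.not_le_iff_exists.mp hnle
  have hw' : w ∈ ((J : FracId R) : Submodule R (FractionRing R)) *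
      ((1 / (J : FracId R) : FracId R) : Submodule R (FractionRing R)) := by
    rw [← coe_mul, mem_coe]
    exact hw
  have hwM' : w ∉ ((M : FracId R) : Submodule R (FractionRing R)) := by
    rw [mem_coe]; exact hwM
  have key : ∀ w ∈ ((J : FracId R) : Submodule R (FractionRing R)) *
      ((1 / (J : FracId R) : FracId R) : Submodule R (FractionRing R)),
      w ∈ ((M : FracId R) : Submodule R (FractionRing R)) ∨
      ∃ j u : FractionRing R, j ∈ (J : FracId R) ∧ u ∈ 1 / (J : FracId R) ∧
        j * u ∉ (M : FracId R) := by
    intro w hw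
    refine Submodule.mul_induction_on hw ?_ ?_
    · intro m hm n hn
      by_cases hmn : m * n ∈ (M : FracId R)
      · exact Or.inl (by rw [mem_coe]; exact hmn)
      · exact Or.inr ⟨m, n, (mem_coe).mp hm, (mem_coe).mp hn, hmn⟩
    · rintro x y (hx | hx) (hy | hy)
      · exact Or.inl (add_mem hx hy)
      · exact Or.inr hy
      · exact Or.inr hx
      · exact Or.inr hx
  rcases key w hw' with h | ⟨j, u, hjJ, huJ, hjuM⟩
  · exact absurd h hwM'
  obtain ⟨c, hcJ, rfl⟩ := (mem_coeIdeal _).mp hjJ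
  have hju1 : algebraMap R (FractionRing R) c * u ∈ (1 : FracId R) := by
    have := mul_mem_mul hjJ huJ
    exact mul_one_div_le_one this
  obtain ⟨t, ht⟩ := (mem_one_iff _).mp hju1
  have htM : t ∉ M := fun htm => hjuM (ht ▸ coeIdeal_mem htm)
  refine ⟨c, hcJ, t, htM, ?_⟩
  intro j' hj'
  have h1 : u * algebraMap R (FractionRing R) j' ∈ (1 : FracId R) := by
    have hm := mul_mem_mul huJ (coeIdeal_mem hj')
    have hle : (1 / (J : FracId R)) * (J : FracId R) ≤ 1 := by
      rw [mul_comm]; exact mul_one_div_le_one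
    exact hle hm
  obtain ⟨r, hr⟩ := (mem_one_iff _).mp h1
  refine ⟨r, aux_inj ?_⟩
  rw [_root_.map_mul, _root_.map_mul, ht, hr]
  ring

private theorem int_thm {x : FractionRing R} (hx0 : x ≠ 0) (hx : x ∉ (1 : FracId R)) :
    ∃ N : Ideal R, IsMaxTIdeal N ∧
      ∀ s : R, algebraMap R (FractionRing R) s * x ∈ (1 : FracId R) → s ∈ N := by
  set E : Ideal R :=
    { carrier := {s : R | algebraMap R (FractionRing R) s * x ∈ (1 : FracId R)}
      add_mem' := by
        intro a b ha hb
        simp only [Set.mem_setOf_eq, _root_.map_add, add_mul] at *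
        obtain ⟨r, hr⟩ := (mem_one_iff _).mp ha
        obtain ⟨r', hr'⟩ := (mem_one_iff _).mp hb
        exact (mem_one_iff _).mpr ⟨r + r', by rw [_root_.map_add, hr, hr']⟩
      zero_mem' := by
        simp only [Set.mem_setOf_eq, _root_.map_zero, zero_mul]
        exact zero_mem _
      smul_mem' := by
        intro c s hs
        simp only [Set.mem_setOf_eq, smul_eq_mul, _root_.map_mul] at *
        rw [mul_assoc]
        obtain ⟨r, hr⟩ := (mem_one_iff _).mp hs
        rw [← hr, ← _root_.map_mul]
        exact (mem_one_iff _).mpr ⟨c * r, rfl⟩ } with hE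
  have hmemE : ∀ s : R, s ∈ E ↔ algebraMap R (FractionRing R) s * x ∈ (1 : FracId R) :=
    fun s => Iff.rfl
  have hE1 : (1 : R) ∉ E := by
    intro h1
    rw [hmemE] at h1
    rw [_root_.map_one, one_mul] at h1
    exact hx h1
  have hEtop : E ≠ ⊤ := fun ht => hE1 (ht ▸ Submodule.mem_top)
  have hEbot : E ≠ ⊥ := by
    obtain ⟨⟨r, d⟩, hrd⟩ := IsLocalization.surj (nonZeroDivisors R) x
    intro hb
    have hdE : (d : R) ∈ E := by
      rw [hmemE, mul_comm, hrd]
      exact (mem_one_iff _).mpr ⟨r, rfl⟩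
    rw [hb, Submodule.mem_bot] at hdE
    exact nonZeroDivisors.ne_zero d.2 hdE
  have hEt : IsTIdeal E := by
    refine mk_tIdeal hEbot ?_
    intro G hG0 hGfg hGE
    have hG1 : G ≤ 1 := hGE.trans coeIdeal_le_one
    have hxG : spanSingleton (nonZeroDivisors R) x * G ≤ 1 := by
      rw [mul_le]
      intro i hi g hg
      rw [mem_spanSingleton] at hi
      obtain ⟨z, rfl⟩ := hi
      have hgE : g ∈ (E : FracId R) := hGE hg
      obtain ⟨s, hsE, rfl⟩ := (mem_coeIdeal _).mp hgE
      rw [hmemE] at hsE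
      obtain ⟨r, hr⟩ := (mem_one_iff _).mp hsE
      have heq : z • x * algebraMap R (FractionRing R) s = z • algebraMap R (FractionRing R) r := by
        rw [hr, smul_mul_assoc, mul_comm x]
      rw [heq]
      exact Submodule.smul_mem _ z ((mem_one_iff _).mpr ⟨r, rfl⟩)
    have hvG1 : vOp G ≤ 1 := vOp_le_one hG0 hG1
    have hxvG : spanSingleton (nonZeroDivisors R) x * vOp G ≤ 1 := by
      rw [← vOp_spanSingleton_mul hx0 hG0]
      have hne : spanSingleton (nonZeroDivisors R) x * G ≠ 0 := spanSingleton_mul_ne_zero hx0 hG0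
      calc vOp (spanSingleton (nonZeroDivisors R) x * G) ≤ vOp 1 := vOp_mono hne hxG
        _ = 1 := vOp_one
    intro w hw
    change w ∈ (E : FracId R)
    have hw1 : w ∈ (1 : FracId R) := hvG1 hw
    obtain ⟨s, hs⟩ := (mem_one_iff _).mp hw1
    have hxw : x * w ∈ (1 : FracId R) :=
      hxvG (mul_mem_mul (mem_spanSingleton_self _ x) hw)
    have hsE : s ∈ E := by
      rw [hmemE, hs, mul_comm]
      exact hxw
    exact hs ▸ coeIdeal_mem hsE
  obtain ⟨N, hN, hEN⟩ := exists_maxT hEt hEtop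
  exact ⟨N, hN, fun s hs => hEN ((hmemE s).mpr hs)⟩

end Aux18L

section Aux18M

variable {R : Type*} [CommRing R] [IsDomain R]

private theorem coeIdeal_fg {J : Ideal R} (h : J.FG) :
    ((J : FracId R) : Submodule R (FractionRing R)).FG := by
  rw [coe_coeIdeal, IsLocalization.coeSubmodule]
  exact Submodule.FG.map _ h


end Aux18M

/-- In a completely integrally closed domain, a `t`-super potent maximal
`t`-ideal has height one. -/
theorem cic_tSuperPotent_height_one {R : Type*} [CommRing R] [IsDomain R]
    (hcic : CompletelyIntegrallyClosed R) (M : Ideal R) (hM : IsTSuperPotent M) :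
    HeightOnePrime M := by
  obtain ⟨hMmax, I, hIsr, hIM⟩ := hM
  have hMprime : M.IsPrime := maxT_prime hMmax
  have hM0 : M ≠ ⊥ := hMmax.2.1.1
  have h1M : (1 : R) ∉ M := fun h => hMmax.1 ((Ideal.eq_top_iff_one M).mpr h)
  refine ⟨hMprime, hM0, ?_⟩
  intro Q hQprime hQM
  by_contra hQ0
  obtain ⟨q₀, hq₀Q, hq₀0⟩ := Submodule.ne_bot_iff Q |>.mp hQ0
  obtain ⟨a, haM, haQ⟩ := SetLike.exists_of_lt hQM
  have hQleM : Q ≤ M := hQM.le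
  have ha0 : a ≠ 0 := fun h => haQ (h ▸ Q.zero_mem)
  set J : Ideal R := I ⊔ Ideal.span {a} with hJdef
  have hJfg : J.FG := Submodule.FG.sup hIsr.1.2.1 (Submodule.fg_span (Set.finite_singleton a))
  have hIJ : I ≤ J := le_sup_left
  have hJM : J ≤ M := sup_le hIM ((Ideal.span_singleton_le_iff_mem M).mpr haM)
  have haJ : a ∈ J := (le_sup_right : Ideal.span {a} ≤ J) (Ideal.mem_span_singleton_self a)
  have hJinv : IsTInvertible J := hIsr.2 J hJfg hIJ
  have hJbot : J ≠ ⊥ := hJinv.1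
  obtain ⟨c, hcJ, t, htM, hdiv⟩ := lp_aux hMmax hJinv
  have ht0 : t ≠ 0 := fun h => htM (h ▸ M.zero_mem)
  obtain ⟨ra, hra⟩ := hdiv a haJ
  have hc0 : c ≠ 0 := by
    intro h
    rw [h, zero_mul] at hra
    rcases mul_eq_zero.mp hra with h' | h'
    · exact ht0 h'
    · exact ha0 h'
  have hcQ : c ∉ Q := by
    intro hcQ'
    have : t * a ∈ Q := hra ▸ Q.mul_mem_right ra hcQ'
    rcases hQprime.mem_or_mem this with h' | h'
    · exact htM (hQleM h')
    · exact haQ h'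
  -- Step lemma: local division by c
  have step : ∀ q ∈ Q, ∃ s ∉ M, ∃ r ∈ Q, s * q = c * r := by
    intro q hq
    set H : Ideal R := J ⊔ Ideal.span {q} with hHdef
    have hHfg : H.FG := Submodule.FG.sup hJfg (Submodule.fg_span (Set.finite_singleton q))
    have hIH : I ≤ H := hIJ.trans le_sup_left
    have hHinv : IsTInvertible H := hIsr.2 H hHfg hIH
    obtain ⟨d, hdH, s₁, hs₁M, hdivH⟩ := lp_aux hMmax hHinv
    have hs₁0 : s₁ ≠ 0 := fun h => hs₁M (h ▸ M.zero_mem)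
    have haH : a ∈ H := (le_sup_left : J ≤ H) haJ
    have hqH : q ∈ H := (le_sup_right : Ideal.span {q} ≤ H) (Ideal.mem_span_singleton_self q)
    obtain ⟨g, hg⟩ := hdivH a haH
    obtain ⟨e, he⟩ := hdivH q hqH
    have hd0 : d ≠ 0 := by
      intro h
      rw [h, zero_mul] at hg
      rcases mul_eq_zero.mp hg with h' | h'
      · exact hs₁0 h'
      · exact ha0 h'
    obtain ⟨j₀, hj₀J, z, hz, hdsum⟩ := Submodule.mem_sup.mp hdH
    obtain ⟨r₀, hr₀⟩ := Ideal.mem_span_singleton.mp hz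
    obtain ⟨f, hf⟩ := hdivH j₀ ((le_sup_left : J ≤ H) hj₀J)
    have hsum : s₁ = f + e * r₀ := by
      have h1 : d * s₁ = d * (f + e * r₀) := by
        calc d * s₁ = s₁ * j₀ + (s₁ * q) * r₀ := by
              rw [← hdsum, hr₀]; ring
          _ = d * f + (d * e) * r₀ := by rw [hf, he]
          _ = d * (f + e * r₀) := by ring
      exact mul_left_cancel₀ hd0 h1
    have hcase : f ∉ M ∨ e ∉ M := by
      by_contra hcon
      push_neg at hcon
      apply hs₁M
      rw [hsum]
      exact M.add_mem hcon.1 (M.mul_mem_right r₀ hcon.2)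
    rcases hcase with hfM | heM
    · -- f ∉ M
      have hqf : q * f = j₀ * e := by
        have h1 : s₁ * (q * f) = s₁ * (j₀ * e) := by
          calc s₁ * (q * f) = (s₁ * q) * f := by ring
            _ = (d * e) * f := by rw [he]
            _ = (d * f) * e := by ring
            _ = (s₁ * j₀) * e := by rw [hf]
            _ = s₁ * (j₀ * e) := by ring
        exact mul_left_cancel₀ hs₁0 h1
      have hqfJ : q * f ∈ J := hqf ▸ J.mul_mem_right e hj₀J
      obtain ⟨r', hr'⟩ := hdiv (q * f) hqfJ
      have htfM : t * f ∉ M := fun h => (hMprime.mem_or_mem h).elim htM hfM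
      have heq : (t * f) * q = c * r' := by rw [← hr']; ring
      have hr'Q : r' ∈ Q := by
        have : c * r' ∈ Q := heq ▸ Q.mul_mem_left (t * f) hq
        rcases hQprime.mem_or_mem this with h' | h'
        · exact absurd h' hcQ
        · exact h'
      exact ⟨t * f, htfM, r', hr'Q, heq⟩
    · -- e ∉ M : contradiction
      exfalso
      have hae : a * e = q * g := by
        have h1 : s₁ * (a * e) = s₁ * (q * g) := by
          calc s₁ * (a * e) = (s₁ * a) * e := by ring
            _ = (d * g) * e := by rw [hg]
            _ = (d * e) * g := by ring
            _ = (s₁ * q) * g := by rw [he]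
            _ = s₁ * (q * g) := by ring
        exact mul_left_cancel₀ hs₁0 h1
      have : a * e ∈ Q := hae ▸ Q.mul_mem_right g hq
      rcases hQprime.mem_or_mem this with h' | h'
      · exact haQ h'
      · exact heM (hQleM h')
  -- Power divisibility
  have div : ∀ n : ℕ, ∀ q ∈ Q, ∃ s ∉ M, ∃ r, s * q = c ^ n * r := by
    intro n
    induction n with
    | zero => exact fun q _ => ⟨1, h1M, q, by ring⟩
    | succ n ih =>
      intro q hq
      obtain ⟨s₁, hs₁M, r₁, hr₁Q, heq₁⟩ := step q hq
      obtain ⟨s₂, hs₂M, r₂, heq₂⟩ := ih r₁ hr₁Q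
      refine ⟨s₂ * s₁, fun h => (hMprime.mem_or_mem h).elim hs₂M hs₁M, r₂, ?_⟩
      calc s₂ * s₁ * q = s₂ * (s₁ * q) := by ring
        _ = s₂ * (c * r₁) := by rw [heq₁]
        _ = c * (s₂ * r₁) := by ring
        _ = c * (c ^ n * r₂) := by rw [heq₂]
        _ = c ^ (n + 1) * r₂ := by ring
  -- the almost-integral element u
  have hJ0' : (J : FracId R) ≠ 0 := coeIdeal_ne_zero'' hJbot
  have hJfg' : ((J : FracId R) : Submodule R (FractionRing R)).FG := coeIdeal_fg hJfg
  have hJMfrac : (J : FracId R) ≤ (M : FracId R) := (coeIdeal_le_coeIdeal _).mpr hJM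
  have hnotle : ¬ ((1 : FracId R) / (J : FracId R) ≤ 1) := by
    intro hle
    have h1le : (1 : FracId R) ≤ 1 / (J : FracId R) := by
      refine (le_div_iff_mul_le hJ0').mpr ?_
      rw [one_mul]
      exact coeIdeal_le_one
    have hveq : vOp (J : FracId R) = 1 := by
      rw [vOp, le_antisymm hle h1le, FractionalIdeal.div_one]
    have h1v : (1 : FractionRing R) ∈ vOp (J : FracId R) := by
      rw [hveq]; exact one_mem_one _
    have := tIdeal_absorbs hMmax.2.1 hJ0' hJfg' hJMfrac h1v
    obtain ⟨m, hm, hm1⟩ := (mem_coeIdeal _).mp this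
    have hm2 : m = 1 := by simpa using hm1
    exact h1M (hm2 ▸ hm)
  obtain ⟨u, huJ, hu1⟩ := SetLike.not_le_iff_exists.mp hnotle
  have hu0 : u ≠ 0 := fun h => hu1 (h ▸ zero_mem _)
  have hmul1 : ∀ b ∈ J, ∃ w : R, algebraMap R (FractionRing R) b * u
      = algebraMap R (FractionRing R) w := by
    intro b hb
    have hm := mul_mem_mul (coeIdeal_mem hb) huJ
    have : algebraMap R (FractionRing R) b * u ∈ (1 : FracId R) := mul_one_div_le_one hm
    obtain ⟨w, hw⟩ := (mem_one_iff _).mp this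
    exact ⟨w, hw.symm⟩
  -- the CIC input
  have key : ∀ n : ℕ, 0 < n → ∃ r : R, algebraMap R (FractionRing R) q₀ * u ^ n
      = algebraMap R (FractionRing R) r := by
    intro n _
    set x := algebraMap R (FractionRing R) q₀ * u ^ n with hxdef
    have hx1 : x ∈ (1 : FracId R) := by
      by_contra hxnot
      have hx0 : x ≠ 0 :=
        mul_ne_zero (aux_map_ne_zero hq₀0) (pow_ne_zero n hu0)
      obtain ⟨N, hN, hNprop⟩ := int_thm hx0 hxnot
      by_cases hNM : N = M
      · obtain ⟨s, hsM, r, hsq⟩ := div n q₀ hq₀Q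
        obtain ⟨w, hw⟩ := hmul1 c hcJ
        have heq : algebraMap R (FractionRing R) s * x
            = algebraMap R (FractionRing R) (r * w ^ n) := by
          rw [hxdef]
          calc algebraMap R (FractionRing R) s * (algebraMap R (FractionRing R) q₀ * u ^ n)
              = algebraMap R (FractionRing R) (s * q₀) * u ^ n := by
                rw [_root_.map_mul]; ring
            _ = algebraMap R (FractionRing R) (c ^ n * r) * u ^ n := by rw [hsq]
            _ = algebraMap R (FractionRing R) r
                * (algebraMap R (FractionRing R) c * u) ^ n := by
                rw [_root_.map_mul, _root_.map_pow, mul_pow]; ring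
            _ = algebraMap R (FractionRing R) r * (algebraMap R (FractionRing R) w) ^ n := by
                rw [hw]
            _ = algebraMap R (FractionRing R) (r * w ^ n) := by
                rw [_root_.map_mul, _root_.map_pow]
        have : s ∈ N := hNprop s ((mem_one_iff _).mpr ⟨r * w ^ n, heq.symm⟩)
        exact hsM (hNM ▸ this)
      · have hJN : ¬ J ≤ N := by
          intro hJN
          obtain ⟨M', hM'⟩ := hIsr.1.2.2
          have h1 := hM'.2 M ⟨hMmax, hIM⟩
          have h2 := hM'.2 N ⟨hN, hIJ.trans hJN⟩
          exact hNM (h2.trans h1.symm)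
        obtain ⟨t₁, ht₁J, ht₁N⟩ := SetLike.not_le_iff_exists.mp hJN
        obtain ⟨w₁, hw₁⟩ := hmul1 t₁ ht₁J
        have heq : algebraMap R (FractionRing R) (t₁ ^ n) * x
            = algebraMap R (FractionRing R) (q₀ * w₁ ^ n) := by
          rw [hxdef]
          calc algebraMap R (FractionRing R) (t₁ ^ n)
                * (algebraMap R (FractionRing R) q₀ * u ^ n)
              = algebraMap R (FractionRing R) q₀
                * (algebraMap R (FractionRing R) t₁ * u) ^ n := by
                rw [_root_.map_pow, mul_pow]; ring
            _ = algebraMap R (FractionRing R) q₀ * (algebraMap R (FractionRing R) w₁) ^ n := by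
                rw [hw₁]
            _ = algebraMap R (FractionRing R) (q₀ * w₁ ^ n) := by
                rw [_root_.map_mul, _root_.map_pow]
        have htNpow : t₁ ^ n ∈ N :=
          hNprop (t₁ ^ n) ((mem_one_iff _).mpr ⟨q₀ * w₁ ^ n, heq.symm⟩)
        exact ht₁N ((maxT_prime hN).mem_of_pow_mem n htNpow)
    obtain ⟨r, hr⟩ := (mem_one_iff _).mp hx1
    exact ⟨r, hr.symm⟩
  obtain ⟨r, hr⟩ := hcic q₀ u hq₀0 key
  exact hu1 (hr ▸ (mem_one_iff _).mpr ⟨r, rfl⟩)
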